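/- arXiv:1106.4057 — 3 statements merged into one kernel-verified Lean document; each statement's English description precedes it below -/
import Mathlib

section
/- For any odd positive integer n = 2m+1, the alternating sum Σ_{i=1}^{n} (−1)^{i−1}·binom(n+i−2, i−1)·((2n−i−1)!/(n−i)!)·Π_{j=0}^{n−2} (3j+1)!/(n+j)! equals ((1/2^m)·Π_{i=1}^{m} (6i−2)!(2i−1)!/((4i−1)!(4i−2)!))^2. -/
/-!
Put `N = n - 1` and `k = i - 1`. Since `(2N-k)!/(N-k)! = N! · C(2N-k, N)`, the alternating sum is
`N!` times the coefficient of `x^N` in `(1+x)^{-(N+1)} (1-x)^{-(N+1)} = (1-x²)^{-(N+1)}`, which for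
`N = 2m` is `C(3m, 2m)`. The sum therefore equals `(3m)!/m!`. Writing `Π_{j<2m} (2m+1+j)!` as a
quotient of superfactorials, `(3m)!/m! · Π_{j<2m} (3j+1)!/(2m+1+j)!` and `(A^V_{2m+1})²` are then
seen to change by the same factor when `m` increases by one.
-/

open Finset Nat PowerSeries

theorem sum_antidiagonal_neg_one_pow_mul_choose_mul_choose {R : Type*} [CommRing R] (N d : ℕ) :
    ∑ p ∈ antidiagonal d, (-1 : R) ^ p.1 * (N + p.1).choose N * (N + p.2).choose N =
      if Even d then ((N + d / 2).choose N : R) else 0 := by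
  set B : R⟦X⟧ := mk fun n ↦ ((N + n).choose N : R)
  have hB : B * (1 - X) ^ (N + 1) = 1 := mk_add_choose_mul_one_sub_pow_eq_one R N
  have hA : rescale (-1) B * (1 + X) ^ (N + 1) = 1 := by
    simpa [rescale_neg_one_X] using congrArg (rescale (-1 : R)) hB
  have hE : (1 - X ^ 2) ^ (N + 1) * expand 2 two_ne_zero B = 1 := by
    simpa [mul_comm] using congrArg (expand 2 two_ne_zero) hB
  have hAB : rescale (-1) B * B * (1 - X ^ 2) ^ (N + 1) = 1 := by
    rw [show (1 - X ^ 2 : R⟦X⟧) = (1 + X) * (1 - X) by ring, mul_pow]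
    linear_combination (B * (1 - X) ^ (N + 1)) * hA + hB
  have key := congrArg (coeff d) (left_inv_eq_right_inv hAB hE)
  rw [coeff_mul, coeff_expand] at key
  simpa [B, coeff_rescale, even_iff_two_dvd] using key

theorem factorial_add_div_factorial (N j : ℕ) :
    ((N + j)! / j ! : ℚ) = N ! * (N + j).choose N := by
  rw [Nat.cast_add_choose]
  field_simp

theorem sum_Icc_neg_one_pow_mul_choose_mul_factorial_div_factorial (N : ℕ) :
    ∑ i ∈ Icc 1 (N + 1), (-1 : ℚ) ^ (i - 1) * ((N + 1 + i - 2).choose (i - 1) : ℚ) *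
        (((2 * (N + 1) - i - 1)! : ℚ) / ((N + 1 - i)! : ℚ)) =
      if Even N then (N ! * (N + N / 2).choose N : ℚ) else 0 := by
  rw [← Ico_add_one_right_eq_Icc, sum_Ico_eq_sum_range, ← mul_zero (N ! : ℚ), ← mul_ite,
    ← sum_antidiagonal_neg_one_pow_mul_choose_mul_choose, Nat.sum_antidiagonal_eq_sum_range_succ_mk,
    mul_sum, Nat.add_sub_cancel]
  refine sum_congr rfl fun k hk ↦ ?_
  obtain ⟨j, rfl⟩ : ∃ j, N = k + j := Nat.exists_eq_add_of_le (Nat.lt_succ_iff.mp (mem_range.mp hk))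
  rw [show 1 + k - 1 = k by omega, show k + j + 1 + (1 + k) - 2 = (k + j) + k by omega,
    show 2 * (k + j + 1) - (1 + k) - 1 = (k + j) + j by omega, show k + j + 1 - (1 + k) = j by omega,
    show k + j - k = j by omega, factorial_add_div_factorial, ← Nat.choose_symm_add]
  ring

theorem superFactorial_mul_prod_range_factorial (n k : ℕ) :
    n.superFactorial * ∏ j ∈ range k, (n + 1 + j)! = (n + k).superFactorial := by
  rw [← prod_range_succ_factorial, ← prod_range_succ_factorial, ← prod_range_add,
    Nat.add_right_comm]

theorem superFactorial_pos (n : ℕ) : 0 < n.superFactorial := by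
  rw [← prod_range_succ_factorial]
  exact prod_pos fun _ _ ↦ factorial_pos _

/-- `A^V_{2m+1}`. -/
noncomputable def vsasmCount (m : ℕ) : ℚ :=
  1 / 2 ^ m * ∏ i ∈ Icc 1 m, ((6 * i - 2)! * (2 * i - 1)! : ℚ) / ((4 * i - 1)! * (4 * i - 2)!)

theorem vsasmCount_succ (m : ℕ) :
    vsasmCount (m + 1) =
      vsasmCount m * ((6 * m + 4)! * (2 * m + 1)! / ((4 * m + 3)! * (4 * m + 2)!)) / 2 := by
  rw [vsasmCount, vsasmCount, prod_Icc_succ_top (by omega), show 6 * (m + 1) - 2 = 6 * m + 4 by omega,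
    show 2 * (m + 1) - 1 = 2 * m + 1 by omega, show 4 * (m + 1) - 1 = 4 * m + 3 by omega,
    show 4 * (m + 1) - 2 = 4 * m + 2 by omega, pow_succ]
  ring

theorem factorial_div_mul_prod_superFactorial_eq_vsasmCount_sq (m : ℕ) :
    ((3 * m)! / m ! : ℚ) * (∏ j ∈ range (2 * m), ((3 * j + 1)! : ℚ)) *
        (2 * m).superFactorial / (4 * m).superFactorial = vsasmCount m ^ 2 := by
  induction m with
  | zero => simp [vsasmCount]
  | succ m ih =>
    rw [vsasmCount_succ, div_pow, mul_pow, ← ih, show 2 * (m + 1) = 2 * m + 1 + 1 by ring,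
      prod_range_succ, prod_range_succ, show 4 * (m + 1) = 4 * m + 1 + 1 + 1 + 1 by ring,
      show 3 * (m + 1) = 3 * m + 1 + 1 + 1 by ring, show 3 * (2 * m + 1) + 1 = 6 * m + 4 by ring,
      show 3 * (2 * m) + 1 = 6 * m + 1 by ring]
    simp only [superFactorial_succ, factorial_succ, cast_mul, cast_add, cast_ofNat, cast_one]
    field_simp
    ring

/-- For odd `n = 2m+1`,
`Σ_{i=1}^{n} (−1)^{i−1}·C(n+i−2, i−1)·(2n−i−1)!/(n−i)!·Π_{j=0}^{n−2} (3j+1)!/(n+j)!`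
equals `((1/2^m)·Π_{i=1}^{m} (6i−2)!(2i−1)!/((4i−1)!(4i−2)!))^2`. -/
theorem asm_minus_one_enumeration_odd (m : ℕ) :
    (∑ i ∈ Finset.Icc 1 (2*m+1), (-1 : ℚ) ^ (i - 1) *
        (Nat.choose ((2*m+1) + i - 2) (i - 1) : ℚ) *
        ((Nat.factorial (2*(2*m+1) - i - 1) : ℚ) / (Nat.factorial ((2*m+1) - i) : ℚ)) *
        ∏ j ∈ Finset.range (2*m), (Nat.factorial (3*j+1) : ℚ) / (Nat.factorial ((2*m+1) + j) : ℚ)) =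
      ((1 / 2 ^ m : ℚ) * ∏ i ∈ Finset.Icc 1 m,
        ((Nat.factorial (6*i-2) : ℚ) * (Nat.factorial (2*i-1) : ℚ)) /
          ((Nat.factorial (4*i-1) : ℚ) * (Nat.factorial (4*i-2) : ℚ))) ^ 2 := by
  rw [← sum_mul, sum_Icc_neg_one_pow_mul_choose_mul_factorial_div_factorial,
    if_pos (even_two_mul m), Nat.mul_div_cancel_left m two_pos]
  refine Eq.trans ?_ (factorial_div_mul_prod_superFactorial_eq_vsasmCount_sq m)
  have hsf := superFactorial_mul_prod_range_factorial (2 * m) (2 * m)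
  rw [show 2 * m + 2 * m = 4 * m by ring] at hsf
  have hsf_ne : ((2 * m).superFactorial : ℚ) ≠ 0 := mod_cast (superFactorial_pos _).ne'
  rw [prod_div_distrib, ← hsf, Nat.cast_add_choose, show 2 * m + m = 3 * m by ring]
  push_cast
  field_simp
end

section
/- For any even positive integer n, the alternating sum Σ_{i=1}^{n} (−1)^{i−1}·binom(n+i−2, i−1)·((2n−i−1)!/(n−i)!)·Π_{j=0}^{n−2} (3j+1)!/(n+j)! equals 0. -/
/-!
The refined counts are symmetric, `A_{n,i} = A_{n,n+1-i}`: both equal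
`(n+i-2)! (2n-i-1)! / ((i-1)! (n-1)! (n-i)!)`. For even `n` the signs `(-1)^(i-1)` and
`(-1)^(n-i)` of the two terms are opposite, so the terms cancel in pairs.
-/

open Finset

open Nat in
theorem choose_add_mul_factorial_div_factorial_comm {K : Type*} [Field K] [CharZero K]
    (m a b : ℕ) :
    ((m + a).choose a : K) * ((m + b)! / b !) = ((m + b).choose b : K) * ((m + a)! / a !) := by
  rw [add_comm m a, add_comm m b, cast_add_choose, cast_add_choose]
  have := a.factorial_ne_zero
  field_simp

theorem sum_range_neg_one_pow_mul_eq_zero_of_palindromic {R : Type*} [CommRing R] {n : ℕ}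
    (hn : Even n) (g : ℕ → R) (hg : ∀ a < n, g (n - 1 - a) = g a) :
    ∑ a ∈ range n, (-1) ^ a * g a = 0 := by
  refine sum_involution (fun a _ ↦ n - 1 - a) (fun a ha ↦ ?_) (fun a ha _ ↦ ?_)
    (fun a ha ↦ ?_) (fun a ha ↦ ?_) <;> rw [mem_range] at ha
  · have hodd : (-1 : R) ^ (n - 1 - a) * (-1) ^ a = -1 := by
      rw [← pow_add, Nat.sub_add_cancel (by omega),
        (Nat.Even.sub_odd (by omega) hn odd_one).neg_one_pow]
    have hsq : ((-1 : R) ^ a) ^ 2 = 1 := by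
      rw [← pow_mul, (even_two.mul_left a).neg_one_pow]
    have hsign : (-1 : R) ^ (n - 1 - a) = -(-1) ^ a := by
      linear_combination (-1 : R) ^ a * hodd - (-1 : R) ^ (n - 1 - a) * hsq
    rw [hg a ha, hsign]
    ring
  · obtain ⟨k, rfl⟩ := hn
    omega
  · rw [mem_range]
    omega
  · omega

theorem asm_minus_one_enumeration_even_general (n : ℕ) (hne : Even n) :
    (∑ i ∈ Finset.Icc 1 n, (-1 : ℚ) ^ (i - 1) *
        (Nat.choose (n + i - 2) (i - 1) : ℚ) *
        ((Nat.factorial (2*n - i - 1) : ℚ) / (Nat.factorial (n - i) : ℚ)) *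
        ∏ j ∈ Finset.range (n - 1),
          (Nat.factorial (3*j+1) : ℚ) / (Nat.factorial (n + j) : ℚ)) = 0 := by
  set g : ℕ → ℚ := fun a ↦ ((n - 1 + a).choose a : ℚ) *
    ((n - 1 + (n - 1 - a)).factorial / (n - 1 - a).factorial)
  have hshift : ∑ i ∈ Icc 1 n, (-1 : ℚ) ^ (i - 1) * ((n + i - 2).choose (i - 1) : ℚ) *
      ((2 * n - i - 1).factorial / (n - i).factorial) = ∑ a ∈ range n, (-1) ^ a * g a := by
    rw [range_eq_Ico, ← Ico_add_one_right_eq_Icc, ← sum_Ico_add' _ 0 n 1]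
    refine sum_congr rfl fun a ha ↦ ?_
    rw [mem_Ico] at ha
    rw [show n + (a + 1) - 2 = n - 1 + a by omega,
      show 2 * n - (a + 1) - 1 = n - 1 + (n - 1 - a) by omega,
      show n - (a + 1) = n - 1 - a by omega, Nat.add_sub_cancel, mul_assoc]
  rw [← sum_mul, hshift, sum_range_neg_one_pow_mul_eq_zero_of_palindromic hne g fun a ha ↦ ?_,
    zero_mul]
  simp only [g]
  rw [choose_add_mul_factorial_div_factorial_comm, Nat.sub_sub_self (by omega : a ≤ n - 1)]

/-- For even positive `n`,
`Σ_{i=1}^{n} (−1)^{i−1}·C(n+i−2, i−1)·(2n−i−1)!/(n−i)!·Π_{j=0}^{n−2} (3j+1)!/(n+j)! = 0`. -/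
theorem asm_minus_one_enumeration_even (n : ℕ) (hn : 0 < n) (hne : Even n) :
    (∑ i ∈ Finset.Icc 1 n, (-1 : ℚ) ^ (i - 1) *
        (Nat.choose (n + i - 2) (i - 1) : ℚ) *
        ((Nat.factorial (2*n - i - 1) : ℚ) / (Nat.factorial (n - i) : ℚ)) *
        ∏ j ∈ Finset.range (n - 1),
          (Nat.factorial (3*j+1) : ℚ) / (Nat.factorial (n + j) : ℚ)) = 0 :=
  asm_minus_one_enumeration_even_general n hne
end

section
/- The sum over i from 1 to n of A_{n,i} equals the total number of alternating sign matrices A_n = Π_{k=0}^{n−1} (3k+1)!/(n+k)!; i.e., Σ_{i=1}^{n} binom(n+i−2, i−1)·((2n−i−1)!/(n−i)!)·Π_{j=0}^{n−2} (3j+1)!/(n+j)! = Π_{k=0}^{n−1} (3k+1)!/(n+k)!. -/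
/-!
Writing `n = m + 1`, the product on the right is the one on the left times
`(3m+1)! / (2m+1)!`, so it suffices that the refined ratios `A_{n,i} / A_{n-1}` sum to it.
With `k = i - 1` the ratio is `m! · C(m+k, k) · C(2m-k, m-k)`, and the upper Vandermonde
convolution `∑ₖ C(m+k, k) C(2m-k, m-k) = C(3m+1, m)` gives `m! · C(3m+1, m) = (3m+1)! / (2m+1)!`.
-/

open Finset Nat

lemma Ring.choose_neg_natCast_add_one (a k : ℕ) :
    Ring.choose (-((a : ℤ) + 1)) k = (-1) ^ k * (a + k).choose k := by
  rw [Ring.choose_neg, show (a : ℤ) + 1 + k - 1 = ((a + k : ℕ) : ℤ) by push_cast; ring,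
    Ring.choose_natCast, Units.smul_def, Int.coe_negOnePow_natCast, smul_eq_mul]

/-- Chu–Vandermonde in the binomial ring `ℤ`, evaluated at `-(r + 1)` and `-(s + 1)`. -/
theorem Nat.sum_antidiagonal_add_choose_mul_add_choose (r s m : ℕ) :
    ∑ ij ∈ antidiagonal m, (r + ij.1).choose ij.1 * (s + ij.2).choose ij.2 =
      (r + s + 1 + m).choose m := by
  have h := Ring.add_choose_eq m (Commute.all (-((r : ℤ) + 1)) (-((s : ℤ) + 1)))
  rw [show -((r : ℤ) + 1) + -((s : ℤ) + 1) = -(((r + s + 1 : ℕ) : ℤ) + 1) by push_cast; ring,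
    Ring.choose_neg_natCast_add_one] at h
  have hsign : ∀ ij ∈ antidiagonal m,
      Ring.choose (-((r : ℤ) + 1)) ij.1 * Ring.choose (-((s : ℤ) + 1)) ij.2 =
        (-1) ^ m * ((r + ij.1).choose ij.1 * (s + ij.2).choose ij.2 : ℕ) := by
    rintro ⟨i, j⟩ hij
    rw [HasAntidiagonal.mem_antidiagonal] at hij
    subst hij
    simp only [Ring.choose_neg_natCast_add_one, pow_add]
    push_cast
    ring
  rw [sum_congr rfl hsign, ← mul_sum] at h
  exact_mod_cast (mul_right_injective₀ (pow_ne_zero m (by norm_num : (-1 : ℤ) ≠ 0)) h).symm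

theorem Nat.cast_factorial_add_div_factorial {K : Type*} [Field K] [CharZero K] (a b : ℕ) :
    ((a + b)! : K) / b ! = (a + b).choose a * a ! := by
  rw [Nat.cast_add_choose, div_mul_eq_mul_div, mul_comm (a ! : K),
    mul_div_mul_right _ _ (Nat.cast_ne_zero.mpr a.factorial_ne_zero)]

theorem sum_antidiagonal_choose_mul_factorial_div {K : Type*} [Field K] [CharZero K] (m : ℕ) :
    ∑ ij ∈ antidiagonal m, ((m + ij.1).choose ij.1 : K) * ((m + ij.2)! / ij.2!) =
      (3 * m + 1)! / (2 * m + 1)! := by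
  calc
    _ = ∑ ij ∈ antidiagonal m,
          ((m + ij.1).choose ij.1 * (m + ij.2).choose ij.2 : ℕ) * (m ! : K) := by
      refine sum_congr rfl fun ij _ => ?_
      rw [Nat.cast_factorial_add_div_factorial, Nat.choose_symm_add]
      push_cast
      ring
    _ = (m + (2 * m + 1)).choose m * m ! := by
      rw [← sum_mul, ← Nat.cast_sum, Nat.sum_antidiagonal_add_choose_mul_add_choose]
      congr 3
      ring
    _ = (3 * m + 1)! / (2 * m + 1)! := by
      rw [← Nat.cast_factorial_add_div_factorial]
      congr 3
      ring

theorem sum_Icc_choose_mul_factorial_div (m : ℕ) :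
    ∑ i ∈ Icc 1 (m + 1), ((m + 1 + i - 2).choose (i - 1) : ℚ) *
        ((2 * (m + 1) - i - 1)! / (m + 1 - i)!) = (3 * m + 1)! / (m + 1 + m)! := by
  rw [← Ico_add_one_right_eq_Icc, sum_Ico_eq_sum_range, Nat.add_sub_cancel,
    show m + 1 + m = 2 * m + 1 by ring, ← sum_antidiagonal_choose_mul_factorial_div,
    Nat.sum_antidiagonal_eq_sum_range_succ (fun i j => ((m + i).choose i : ℚ) * ((m + j)! / j !))]
  refine sum_congr rfl fun k hk => ?_
  have hk : k ≤ m := Nat.lt_succ_iff.mp (mem_range.mp hk)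
  rw [show m + 1 + (1 + k) - 2 = m + k by omega, show 1 + k - 1 = k by omega,
    show 2 * (m + 1) - (1 + k) - 1 = m + (m - k) by omega, show m + 1 - (1 + k) = m - k by omega]

/-- The refined ASM counts sum to the total number of alternating sign matrices:
`Σ_{i=1}^{n} C(n+i−2, i−1)·(2n−i−1)!/(n−i)!·Π_{j=0}^{n−2} (3j+1)!/(n+j)!
  = Π_{k=0}^{n−1} (3k+1)!/(n+k)!`. -/
theorem sum_refined_asm (n : ℕ) (hn : 0 < n) :
    (∑ i ∈ Finset.Icc 1 n,
        (Nat.choose (n + i - 2) (i - 1) : ℚ) *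
        ((Nat.factorial (2*n - i - 1) : ℚ) / (Nat.factorial (n - i) : ℚ)) *
        ∏ j ∈ Finset.range (n - 1),
          (Nat.factorial (3*j+1) : ℚ) / (Nat.factorial (n + j) : ℚ)) =
    ∏ k ∈ Finset.range n,
      (Nat.factorial (3*k+1) : ℚ) / (Nat.factorial (n + k) : ℚ) := by
  obtain ⟨m, rfl⟩ := Nat.exists_eq_add_one_of_ne_zero hn.ne'
  rw [Nat.add_sub_cancel, ← sum_mul, sum_Icc_choose_mul_factorial_div, prod_range_succ, mul_comm]
end
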